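/- Let a, c, ℓ, n be real numbers with 1 < a < 13/12, c ≥ 1, ℓ ≥ 0, and n ≥ 6. Then c·a^(ℓ-1)·(a^(6/(c·a^(ℓ-1)·n)) - 1) < 1/n. -/

import Mathlib

/-! With `M = c·a^(ℓ-1)` and `s = 6/(M n)`, the bound `(1 + x)^s ≤ 1 + 2 s x` for `x = a - 1`
gives `M (a^s - 1) ≤ 2 M s (a - 1) = 12 (a - 1)/n < 1/n`. Its hypothesis `s (a - 1) ≤ 1` holds
because `M ≥ a⁻¹` (as `c ≥ 1`, `ℓ ≥ 0`), so `s ≤ 6a/n ≤ a < 13/12`. -/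

open Real

theorem Real.one_add_rpow_le_one_add_two_mul {x s : ℝ} (hx : 0 ≤ x) (hs : 0 ≤ s)
    (hsx : s * x ≤ 1) : (1 + x) ^ s ≤ 1 + 2 * s * x := by
  have hsx0 : 0 ≤ s * x := mul_nonneg hs hx
  have hexp : exp (s * x) - 1 ≤ 2 * (s * x) := by
    simpa [abs_of_nonneg hsx0] using
      (abs_le.1 (abs_exp_sub_one_le (x := s * x) (by rwa [abs_of_nonneg hsx0]))).2
  calc (1 + x) ^ s = exp (log (1 + x) * s) := rpow_def_of_pos (by linarith) s
    _ ≤ exp (s * x) := by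
        rw [mul_comm]
        gcongr
        linarith [log_le_sub_one_of_pos (by linarith : (0 : ℝ) < 1 + x)]
    _ ≤ 1 + 2 * s * x := by linarith

theorem inv_le_mul_rpow_sub_one {a c ℓ : ℝ} (ha : 1 ≤ a) (hc : 1 ≤ c) (hℓ : 0 ≤ ℓ) :
    a⁻¹ ≤ c * a ^ (ℓ - 1) := by
  calc a⁻¹ = a ^ (-1 : ℝ) := (rpow_neg_one a).symm
    _ ≤ a ^ (ℓ - 1) := rpow_le_rpow_of_exponent_le ha (by linarith)
    _ ≤ c * a ^ (ℓ - 1) := le_mul_of_one_le_left (by positivity) hc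

theorem stmt_4 (a c ℓ n : ℝ) (ha1 : 1 < a) (ha2 : a < 13 / 12)
    (hc : 1 ≤ c) (hℓ : 0 ≤ ℓ) (hn : 6 ≤ n) :
    c * a ^ (ℓ - 1) * (a ^ (6 / (c * a ^ (ℓ - 1) * n)) - 1) < 1 / n := by
  have ha0 : 0 < a := by linarith
  have hn0 : 0 < n := by linarith
  set M := c * a ^ (ℓ - 1)
  have hM : a⁻¹ ≤ M := inv_le_mul_rpow_sub_one ha1.le hc hℓ
  have hM0 : 0 < M := (inv_pos.2 ha0).trans_le hM
  set s := 6 / (M * n)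
  have hs0 : 0 < s := by positivity
  have hMs : M * s = 6 / n := by simp only [s]; field_simp
  have hs : s ≤ a := by
    calc s ≤ 6 / (a⁻¹ * n) := by simp only [s]; gcongr
      _ = a * (6 / n) := by field_simp
      _ ≤ a := mul_le_of_le_one_right ha0.le ((div_le_one hn0).2 hn)
  have hpow : a ^ s ≤ 1 + 2 * s * (a - 1) := by
    simpa using Real.one_add_rpow_le_one_add_two_mul (x := a - 1) (by linarith) hs0.le
      (by nlinarith)
  calc M * (a ^ s - 1) ≤ M * (2 * s * (a - 1)) := by gcongr; linarith
    _ = 2 * (M * s) * (a - 1) := by ring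
    _ = 12 * (a - 1) / n := by rw [hMs]; ring
    _ < 1 / n := by gcongr; linarith
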